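/- arXiv:2601.18304 — 5 statements merged into one kernel-verified Lean document; each statement's English description precedes it below -/
import Mathlib

section
/- Let P and Q be Markov kernels on a measurable space (M,𝓕) such that for every x ∈ M, ‖δ_x P^t Q − δ_x Q P^t‖_TV → 0 as t → ∞, and such that there exists c > 0 with Q_x(A) ≤ c · P̃_x(A) for all x ∈ M and A ∈ 𝓕, where P̃ = Σ_{n≥0} 2^{-(n+1)} P^n. Then every bounded P-harmonic function on M is also Q-harmonic. -/
open MeasureTheory Filter ProbabilityTheory
open scoped ENNReal NNReal

noncomputable def tvDist {α : Type*} [MeasurableSpace α] (μ ν : Measure α) : ℝ :=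
  ⨆ A : Set α, |(μ A).toReal - (ν A).toReal|

/-- Iterates of a Markov kernel: `kpow P t x` is the law `δ_x P^t`. -/
noncomputable def kpow {M : Type*} [MeasurableSpace M] (P : Kernel M M) : ℕ → Kernel M M
  | 0 => Kernel.id
  | n+1 => Kernel.comp P (kpow P n)

/-- `P̃ = Σ_{n≥0} 2^{-(n+1)} P^n` applied at `x`. -/
noncomputable def ktilde {M : Type*} [MeasurableSpace M] (P : Kernel M M) (x : M) : Measure M :=
  Measure.sum (fun n => ((2:ℝ≥0∞)^(n+1))⁻¹ • (kpow P n) x)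

open scoped Topology

/-!
Asymptotic commutation gives `P^t (Q f) → Q f` pointwise for every bounded `P`-harmonic `f`,
because `Q (P^t f) = Q f`; dominated convergence then shows that `Q f` is again `P`-harmonic.
The domination `Q_x ≤ c P̃_x` together with `P̃ g = g` gives `Q g ≤ c g` for every nonnegative
bounded `P`-harmonic `g`.

Let `u = h - Q h` and `s = sup u`. Applied to the iterates `Q^k (s - u)`, this gives
`Q^k u ≥ s - c^k (s - u)`, while the telescoping sum `∑_{k<n} Q^k u = h - Q^n h` is bounded
by `2 sup |h|`. If `s > 0`, taking `n > 2 sup |h| / s` forces `u ≤ s - δ` everywhere for some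
`δ > 0`, contradicting `s = sup u`. Hence `h ≤ Q h`, and applying this to `-h` gives `h = Q h`.
-/

section

variable {M : Type*} [MeasurableSpace M]

lemma kpow_eq_pow (P : Kernel M M) (n : ℕ) : kpow P n = P ^ n := by
  induction n with
  | zero => rfl
  | succ n ih => rw [kpow, ih, pow_succ']; rfl

lemma kpow_succ' (P : Kernel M M) (n : ℕ) : kpow P (n + 1) = kpow P n ∘ₖ P := by
  rw [kpow_eq_pow, kpow_eq_pow, pow_succ]; rfl

instance isMarkovKernel_kpow (P : Kernel M M) [IsMarkovKernel P] (n : ℕ) :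
    IsMarkovKernel (kpow P n) := by
  induction n with
  | zero => rw [kpow]; infer_instance
  | succ n ih => rw [kpow]; infer_instance

lemma integrable_of_abs_le {f : M → ℝ} {C : ℝ} (hf : Measurable f) (hC : ∀ x, |f x| ≤ C)
    (μ : Measure M) [IsFiniteMeasure μ] : Integrable f μ :=
  .of_bound hf.aestronglyMeasurable C (.of_forall fun x ↦ (Real.norm_eq_abs _).trans_le (hC x))

lemma abs_integral_le_of_abs_le {f : M → ℝ} {C : ℝ} (hC : ∀ x, |f x| ≤ C)
    (μ : Measure M) [IsProbabilityMeasure μ] : |∫ x, f x ∂μ| ≤ C := by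
  simpa using norm_integral_le_of_norm_le_const (μ := μ) (f := f) (.of_forall hC)

lemma abs_measureReal_sub_le_tvDist (μ ν : Measure M) [IsProbabilityMeasure μ]
    [IsProbabilityMeasure ν] (A : Set M) : |μ.real A - ν.real A| ≤ tvDist μ ν :=
  le_ciSup (f := fun A ↦ |μ.real A - ν.real A|)
    ⟨1, Set.forall_mem_range.2 fun _ ↦ abs_sub_le_of_nonneg_of_le measureReal_nonneg
      measureReal_le_one measureReal_nonneg measureReal_le_one⟩ A

lemma abs_integral_sub_le_mul_tvDist_of_nonneg {g : M → ℝ} {K : ℝ} (hg : Measurable g)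
    (hg0 : 0 ≤ g) (hgK : ∀ x, g x ≤ K) (μ ν : Measure M) [IsProbabilityMeasure μ]
    [IsProbabilityMeasure ν] : |∫ x, g x ∂μ - ∫ x, g x ∂ν| ≤ K * tvDist μ ν := by
  have layer (ρ : Measure M) [IsProbabilityMeasure ρ] :
      ∫ x, g x ∂ρ = ∫ t in Set.Ioc 0 K, ρ.real {x | t ≤ g x} :=
    (integrable_of_abs_le hg (fun x ↦ (abs_of_nonneg (hg0 x)).trans_le (hgK x)) ρ)
      |>.integral_eq_integral_Ioc_meas_le (.of_forall hg0) (.of_forall hgK)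
  have integrableOn (ρ : Measure M) [IsProbabilityMeasure ρ] :
      IntegrableOn (fun t ↦ ρ.real {x | t ≤ g x}) (Set.Ioc 0 K) :=
    have anti : Antitone fun t ↦ ρ.real {x | t ≤ g x} :=
      fun _ _ hst ↦ measureReal_mono fun _ hx ↦ hst.trans hx
    (anti.locallyIntegrable.integrableOn_isCompact isCompact_Icc).mono_set
      Set.Ioc_subset_Icc_self
  rw [layer μ, layer ν, ← integral_sub (integrableOn μ) (integrableOn ν)]
  calc |∫ t in Set.Ioc 0 K, (μ.real {x | t ≤ g x} - ν.real {x | t ≤ g x})|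
      ≤ tvDist μ ν * volume.real (Set.Ioc 0 K) :=
        norm_setIntegral_le_of_norm_le_const
          (f := fun t ↦ μ.real {x | t ≤ g x} - ν.real {x | t ≤ g x}) measure_Ioc_lt_top
          fun t _ ↦ abs_measureReal_sub_le_tvDist μ ν _
    _ = K * tvDist μ ν := by
        have ⟨x⟩ := nonempty_of_isProbabilityMeasure μ
        have hK : (0 : ℝ) ≤ K := (hg0 x).trans (hgK x)
        rw [Real.volume_real_Ioc_of_le hK, sub_zero, mul_comm]

lemma abs_integral_sub_le_mul_tvDist {f : M → ℝ} {C : ℝ} (hf : Measurable f)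
    (hC : ∀ x, |f x| ≤ C) (μ ν : Measure M) [IsProbabilityMeasure μ] [IsProbabilityMeasure ν] :
    |∫ x, f x ∂μ - ∫ x, f x ∂ν| ≤ 2 * C * tvDist μ ν := by
  have shifted := abs_integral_sub_le_mul_tvDist_of_nonneg (g := fun x ↦ f x + C) (K := 2 * C)
    (hf.add_const C) (fun x ↦ show 0 ≤ f x + C by linarith [neg_abs_le (f x), hC x])
    (fun x ↦ by linarith [le_abs_self (f x), hC x]) μ ν
  rwa [integral_add (integrable_of_abs_le hf hC μ) (integrable_const C),
    integral_add (integrable_of_abs_le hf hC ν) (integrable_const C), integral_const,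
    integral_const, probReal_univ, probReal_univ, one_smul, add_sub_add_right_eq_sub] at shifted

lemma measurable_integral_kernel (κ : Kernel M M) {f : M → ℝ} (hf : Measurable f) :
    Measurable fun x ↦ ∫ y, f y ∂κ x :=
  hf.stronglyMeasurable.integral_kernel.measurable

lemma integral_kpow_zero (P : Kernel M M) {f : M → ℝ} (hf : Measurable f) (x : M) :
    ∫ y, f y ∂kpow P 0 x = f x := by
  rw [kpow, Kernel.id_apply, integral_dirac' _ _ hf.stronglyMeasurable]

lemma tsum_inv_two_pow_succ : ∑' n : ℕ, ((2 : ℝ≥0∞) ^ (n + 1))⁻¹ = 1 := by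
  simp_rw [ENNReal.inv_pow, pow_succ', ENNReal.tsum_mul_left, ENNReal.tsum_geometric_two]
  exact ENNReal.inv_mul_cancel two_ne_zero ENNReal.ofNat_ne_top

def AsymptoticallyCommute (P Q : Kernel M M) : Prop :=
  ∀ x, Tendsto (fun t ↦ tvDist ((kpow P t x).bind Q) ((Q x).bind (kpow P t))) atTop (𝓝 0)

structure IsBddHarmonic (P : Kernel M M) (f : M → ℝ) : Prop where
  measurable : Measurable f
  bdd : ∃ C, ∀ x, |f x| ≤ C
  eq_integral : ∀ x, f x = ∫ y, f y ∂P x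

namespace IsBddHarmonic

variable {P Q : Kernel M M} {f g : M → ℝ}

lemma integrable (hf : IsBddHarmonic P f) (μ : Measure M) [IsFiniteMeasure μ] :
    Integrable f μ :=
  let ⟨_, hC⟩ := hf.bdd
  integrable_of_abs_le hf.measurable hC μ

lemma neg (hf : IsBddHarmonic P f) : IsBddHarmonic P fun x ↦ -f x where
  measurable := hf.measurable.neg
  bdd :=
    let ⟨C, hC⟩ := hf.bdd
    ⟨C, fun x ↦ (abs_neg (f x)).trans_le (hC x)⟩
  eq_integral x := by rw [integral_neg, ← hf.eq_integral]

variable [IsMarkovKernel P]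

lemma sub (hf : IsBddHarmonic P f) (hg : IsBddHarmonic P g) :
    IsBddHarmonic P fun x ↦ f x - g x where
  measurable := hf.measurable.sub hg.measurable
  bdd :=
    let ⟨C, hC⟩ := hf.bdd
    let ⟨D, hD⟩ := hg.bdd
    ⟨C + D, fun x ↦ (abs_sub _ _).trans (add_le_add (hC x) (hD x))⟩
  eq_integral x := by
    rw [integral_sub (hf.integrable _) (hg.integrable _), ← hf.eq_integral, ← hg.eq_integral]

lemma const_sub (hf : IsBddHarmonic P f) (s : ℝ) : IsBddHarmonic P fun x ↦ s - f x where
  measurable := measurable_const.sub hf.measurable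
  bdd :=
    let ⟨C, hC⟩ := hf.bdd
    ⟨|s| + C, fun x ↦ (abs_sub _ _).trans (add_le_add le_rfl (hC x))⟩
  eq_integral x := by
    rw [integral_sub (integrable_const s) (hf.integrable _), ← hf.eq_integral, integral_const,
      probReal_univ, one_smul]

lemma integral_kpow (hf : IsBddHarmonic P f) (t : ℕ) (x : M) : ∫ y, f y ∂kpow P t x = f x := by
  induction t generalizing x with
  | zero => exact integral_kpow_zero P hf.measurable x
  | succ t ih =>
    rw [kpow_succ', Kernel.integral_comp (hf.integrable _)]
    simp_rw [ih]
    exact (hf.eq_integral x).symm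

lemma tendsto_integral_kpow_integral [IsMarkovKernel Q] (hPQ : AsymptoticallyCommute P Q)
    (hf : IsBddHarmonic P f) (x : M) :
    Tendsto (fun t ↦ ∫ y, ∫ z, f z ∂Q y ∂kpow P t x) atTop (𝓝 (∫ y, f y ∂Q x)) := by
  obtain ⟨C, hC⟩ := hf.bdd
  have dist_le (t : ℕ) : ‖∫ y, ∫ z, f z ∂Q y ∂kpow P t x - ∫ y, f y ∂Q x‖
      ≤ 2 * C * tvDist ((kpow P t x).bind Q) ((Q x).bind (kpow P t)) := by
    have hPtQ : ∫ y, f y ∂Q x = ∫ z, f z ∂(kpow P t ∘ₖ Q) x := by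
      rw [Kernel.integral_comp (hf.integrable _)]
      simp_rw [hf.integral_kpow]
    rw [← Kernel.integral_comp (hf.integrable _), hPtQ, ← Kernel.comp_apply, ← Kernel.comp_apply]
    exact abs_integral_sub_le_mul_tvDist hf.measurable hC _ _
  refine tendsto_iff_norm_sub_tendsto_zero.2 (squeeze_zero (fun _ ↦ norm_nonneg _) dist_le ?_)
  simpa using (hPQ x).const_mul (2 * C)

lemma integral_kernel [IsMarkovKernel Q] (hPQ : AsymptoticallyCommute P Q)
    (hf : IsBddHarmonic P f) : IsBddHarmonic P fun x ↦ ∫ y, f y ∂Q x where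
  measurable := measurable_integral_kernel Q hf.measurable
  bdd :=
    let ⟨C, hC⟩ := hf.bdd
    ⟨C, fun x ↦ abs_integral_le_of_abs_le hC _⟩
  eq_integral x := by
    obtain ⟨C, hC⟩ := hf.bdd
    have hQf := measurable_integral_kernel Q hf.measurable
    have hQf_bdd (y : M) : |∫ z, f z ∂Q y| ≤ C := abs_integral_le_of_abs_le hC _
    have lim_dominated : Tendsto (fun t ↦ ∫ z, ∫ y, ∫ w, f w ∂Q y ∂kpow P t z ∂P x) atTop
        (𝓝 (∫ z, ∫ w, f w ∂Q z ∂P x)) :=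
      tendsto_integral_of_dominated_convergence (fun _ ↦ C)
        (fun t ↦ (measurable_integral_kernel _ hQf).aestronglyMeasurable) (integrable_const C)
        (fun t ↦ .of_forall fun z ↦ abs_integral_le_of_abs_le hQf_bdd _)
        (.of_forall fun z ↦ hf.tendsto_integral_kpow_integral hPQ z)
    refine tendsto_nhds_unique
      ((hf.tendsto_integral_kpow_integral hPQ x).comp (tendsto_add_atTop_nat 1))
      (lim_dominated.congr fun t ↦ ?_)
    rw [Function.comp_apply, kpow_succ', Kernel.integral_comp (integrable_of_abs_le hQf hQf_bdd _)]

lemma integral_le_mul [IsMarkovKernel Q] {c : ℝ≥0}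
    (hdom : ∀ x A, Q x A ≤ c * ktilde P x A) (hf : IsBddHarmonic P f) (hf0 : 0 ≤ f) (x : M) :
    ∫ y, f y ∂Q x ≤ c * f x := by
  have lintegral_eq (μ : Measure M) [IsFiniteMeasure μ] :
      ENNReal.ofReal (∫ y, f y ∂μ) = ∫⁻ y, ENNReal.ofReal (f y) ∂μ :=
    ofReal_integral_eq_lintegral_ofReal (hf.integrable μ) (.of_forall hf0)
  refine (ENNReal.ofReal_le_ofReal_iff (mul_nonneg c.coe_nonneg (hf0 x))).1 ?_
  calc ENNReal.ofReal (∫ y, f y ∂Q x)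
      = ∫⁻ y, ENNReal.ofReal (f y) ∂Q x := lintegral_eq _
    _ ≤ ∫⁻ y, ENNReal.ofReal (f y) ∂((c : ℝ≥0∞) • ktilde P x) :=
        lintegral_mono' (Measure.le_iff'.2 (hdom x)) le_rfl
    _ = c * ∑' n, ((2 : ℝ≥0∞) ^ (n + 1))⁻¹ * ∫⁻ y, ENNReal.ofReal (f y) ∂kpow P n x := by
        simp only [lintegral_smul_measure, ktilde, lintegral_sum_measure, smul_eq_mul]
    _ = ENNReal.ofReal (c * f x) := by
        simp_rw [← lintegral_eq, hf.integral_kpow, ENNReal.tsum_mul_right, tsum_inv_two_pow_succ,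
          one_mul, ENNReal.ofReal_mul c.coe_nonneg, ENNReal.ofReal_coe_nnreal]

lemma integral_kpow_kernel [IsMarkovKernel Q] (hPQ : AsymptoticallyCommute P Q)
    (hf : IsBddHarmonic P f) (k : ℕ) : IsBddHarmonic P fun x ↦ ∫ y, f y ∂kpow Q k x := by
  induction k with
  | zero => simpa only [integral_kpow_zero Q hf.measurable] using hf
  | succ k ih =>
    convert ih.integral_kernel hPQ using 2 with x
    rw [kpow_succ', Kernel.integral_comp (hf.integrable _)]

lemma integral_kpow_le_pow_mul [IsMarkovKernel Q] (hPQ : AsymptoticallyCommute P Q) {c : ℝ≥0}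
    (hdom : ∀ x A, Q x A ≤ c * ktilde P x A) (hf : IsBddHarmonic P f) (hf0 : 0 ≤ f) (k : ℕ)
    (x : M) : ∫ y, f y ∂kpow Q k x ≤ c ^ k * f x := by
  induction k generalizing x with
  | zero => rw [integral_kpow_zero Q hf.measurable, pow_zero, one_mul]
  | succ k ih =>
    calc ∫ y, f y ∂kpow Q (k + 1) x
        = ∫ z, ∫ y, f y ∂kpow Q k z ∂Q x := by
          rw [kpow_succ', Kernel.integral_comp (hf.integrable _)]
      _ ≤ c * ∫ y, f y ∂kpow Q k x :=
          (hf.integral_kpow_kernel hPQ k).integral_le_mul hdom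
            (fun z ↦ integral_nonneg fun y ↦ hf0 y) x
      _ ≤ c * (c ^ k * f x) := mul_le_mul_of_nonneg_left (ih x) c.coe_nonneg
      _ = c ^ (k + 1) * f x := by ring

end IsBddHarmonic

lemma sum_integral_kpow_sub_integral (Q : Kernel M M) [IsMarkovKernel Q] {h : M → ℝ} {C : ℝ}
    (hh : Measurable h) (hC : ∀ x, |h x| ≤ C) (n : ℕ) (x : M) :
    ∑ k ∈ Finset.range n, ∫ y, (h y - ∫ z, h z ∂Q y) ∂kpow Q k x
      = h x - ∫ y, h y ∂kpow Q n x := by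
  have hQh := measurable_integral_kernel Q hh
  have step (k : ℕ) : ∫ y, (h y - ∫ z, h z ∂Q y) ∂kpow Q k x
      = ∫ y, h y ∂kpow Q k x - ∫ y, h y ∂kpow Q (k + 1) x := by
    rw [integral_sub (integrable_of_abs_le hh hC _)
      (integrable_of_abs_le hQh (fun y ↦ abs_integral_le_of_abs_le hC _) _), kpow,
      Kernel.integral_comp (integrable_of_abs_le hh hC _)]
  simp_rw [step, Finset.sum_range_sub', integral_kpow_zero Q hh]

lemma IsBddHarmonic.natCast_mul_sub_le_geom_sum_mul {P Q : Kernel M M} [IsMarkovKernel P]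
    [IsMarkovKernel Q] (hPQ : AsymptoticallyCommute P Q) {c : ℝ≥0}
    (hdom : ∀ x A, Q x A ≤ c * ktilde P x A) {h : M → ℝ} (hh : IsBddHarmonic P h) {C : ℝ}
    (hC : ∀ x, |h x| ≤ C) {s : ℝ} (hs : ∀ x, h x - ∫ y, h y ∂Q x ≤ s) (n : ℕ) (x : M) :
    n * s - 2 * C ≤ (∑ k ∈ Finset.range n, (c : ℝ) ^ k) * (s - (h x - ∫ y, h y ∂Q x)) := by
  set u : M → ℝ := fun x ↦ h x - ∫ y, h y ∂Q x
  have hu : IsBddHarmonic P u := hh.sub (hh.integral_kernel hPQ)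
  have lower (k : ℕ) : s - c ^ k * (s - u x) ≤ ∫ y, u y ∂kpow Q k x := by
    have := (hu.const_sub s).integral_kpow_le_pow_mul hPQ hdom (fun y ↦ sub_nonneg.2 (hs y)) k x
    rw [integral_sub (integrable_const s) (hu.integrable _), integral_const, probReal_univ,
      one_smul] at this
    linarith
  have telescope := sum_integral_kpow_sub_integral Q hh.measurable hC n x
  have sum_lower := Finset.sum_le_sum fun k (_ : k ∈ Finset.range n) ↦ lower k
  simp only [Finset.sum_sub_distrib, ← Finset.sum_mul, Finset.sum_const, Finset.card_range,
    nsmul_eq_mul] at sum_lower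
  linarith [le_abs_self (h x), hC x, neg_abs_le (∫ y, h y ∂kpow Q n x),
    abs_integral_le_of_abs_le hC (kpow Q n x)]

lemma IsBddHarmonic.le_integral {P Q : Kernel M M} [IsMarkovKernel P] [IsMarkovKernel Q]
    (hPQ : AsymptoticallyCommute P Q) {c : ℝ≥0} (hdom : ∀ x A, Q x A ≤ c * ktilde P x A)
    {h : M → ℝ} (hh : IsBddHarmonic P h) (x : M) : h x ≤ ∫ y, h y ∂Q x := by
  obtain ⟨C, hC⟩ := hh.bdd
  set u : M → ℝ := fun x ↦ h x - ∫ y, h y ∂Q x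
  obtain ⟨B, hB⟩ := (hh.sub (hh.integral_kernel hPQ)).bdd
  have hu_bdd : BddAbove (Set.range u) :=
    ⟨B, Set.forall_mem_range.2 fun y ↦ (le_abs_self _).trans (hB y)⟩
  set s := sSup (Set.range u)
  have hus (y : M) : u y ≤ s := le_csSup hu_bdd ⟨y, rfl⟩
  by_contra! hx
  have hs : 0 < s := (sub_pos.2 hx).trans_le (hus x)
  obtain ⟨n, hn⟩ := exists_nat_gt (2 * C / s)
  have hn : 2 * C < n * s := (div_lt_iff₀ hs).1 hn
  set K := ∑ k ∈ Finset.range n, (c : ℝ) ^ k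
  have hK : 0 < K := geom_sum_pos c.coe_nonneg <| by
    rintro rfl
    rw [Nat.cast_zero, zero_mul] at hn
    linarith [hC x, abs_nonneg (h x)]
  have hsup : s ≤ s - (n * s - 2 * C) / K :=
    csSup_le ⟨u x, x, rfl⟩ <| Set.forall_mem_range.2 fun y ↦ by
      linarith [(div_le_iff₀' hK).2 (hh.natCast_mul_sub_le_geom_sum_mul hPQ hdom hC hus n y)]
  linarith [div_pos (sub_pos.2 hn) hK]

end

theorem stmt2_general {M : Type*} [MeasurableSpace M] (P Q : Kernel M M)
    [IsMarkovKernel P] [IsMarkovKernel Q]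
    (htv : ∀ x : M, Tendsto
      (fun t => tvDist (((kpow P t) x).bind (⇑Q)) ((Q x).bind (⇑(kpow P t)))) atTop (nhds 0))
    (c : ℝ≥0)
    (hdom : ∀ (x : M) (A : Set M), Q x A ≤ (c : ℝ≥0∞) * ktilde P x A)
    (h : M → ℝ) (hmeas : Measurable h) (hbdd : ∃ C, ∀ x, |h x| ≤ C)
    (hharm : ∀ x, h x = ∫ y, h y ∂(P x)) :
    ∀ x, h x = ∫ y, h y ∂(Q x) := by
  have hh : IsBddHarmonic P h := ⟨hmeas, hbdd, hharm⟩
  intro x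
  refine le_antisymm (hh.le_integral htv hdom x) ?_
  have h_neg := hh.neg.le_integral htv hdom x
  rwa [integral_neg, neg_le_neg_iff] at h_neg

/-- asymptotic commutativity of Markov kernels implies that bounded
`P`-harmonic functions are `Q`-harmonic. -/
theorem stmt2 {M : Type*} [MeasurableSpace M] (P Q : Kernel M M)
    [IsMarkovKernel P] [IsMarkovKernel Q]
    (htv : ∀ x : M, Tendsto
      (fun t => tvDist (((kpow P t) x).bind (⇑Q)) ((Q x).bind (⇑(kpow P t)))) atTop (nhds 0))
    (c : ℝ≥0) (hc : 0 < c)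
    (hdom : ∀ (x : M) (A : Set M), Q x A ≤ (c : ℝ≥0∞) * ktilde P x A)
    (h : M → ℝ) (hmeas : Measurable h) (hbdd : ∃ C, ∀ x, |h x| ≤ C)
    (hharm : ∀ x, h x = ∫ y, h y ∂(P x)) :
    ∀ x, h x = ∫ y, h y ∂(Q x) :=
  stmt2_general P Q htv c hdom h hmeas hbdd hharm
end

section
/- Let B be a Banach space, B* its dual, S* the closed unit ball of B*, and T : B → B a linear contraction with adjoint T*. Then for every x ∈ B, lim_{n→∞} ‖T^n x‖ = sup { |⟨x, x*⟩| : x* ∈ ⋂_{n≥1} T*^n S* }. -/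
/-!
`‖Tⁿ x‖` decreases to `L := ⨅ n, ‖Tⁿ x‖`, and `|φ x| ≤ L` whenever `φ = ψ ∘ Tⁿ` with `‖ψ‖ ≤ 1`
for arbitrarily large `n`. For the converse pick norming functionals `ψₙ` of `Tⁿ x`; the
functionals `ψₙ ∘ Tⁿ` lie in the weak-* compact unit ball (Banach–Alaoglu), so they have a
weak-* cluster point `φ`. Since `ψₙ ∘ Tⁿ = (ψₙ ∘ Tⁿ⁻ᵐ) ∘ Tᵐ` for `n ≥ m`, the tail of the
sequence lies in `T*ᵐ S*`, which is weak-* closed as a continuous image of `S*`; hence `φ` lies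
in every `T*ᵐ S*`, and `φ x = lim ‖Tⁿ x‖ = L`.
-/

open Filter Topology WeakDual StrongDual

namespace ContinuousLinearMap

variable {𝕜 E F : Type*} [RCLike 𝕜] [NormedAddCommGroup E] [NormedSpace 𝕜 E]
  [NormedAddCommGroup F] [NormedSpace 𝕜 F]

/-- The image `A* S*` of the closed unit ball of `F*` under the adjoint of `A`. -/
def adjointImageUnitBall (A : E →L[𝕜] F) : Set (StrongDual 𝕜 E) :=
  {φ | ∃ ψ : StrongDual 𝕜 F, ‖ψ‖ ≤ 1 ∧ φ = ψ.comp A}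

theorem isClosed_preimage_adjointImageUnitBall (A : E →L[𝕜] F) :
    IsClosed (toStrongDual ⁻¹' adjointImageUnitBall A : Set (WeakDual 𝕜 E)) := by
  let adjoint : WeakDual 𝕜 F → WeakDual 𝕜 E := fun χ => toWeakDual ((toStrongDual χ).comp A)
  have hcont : Continuous adjoint :=
    continuous_of_continuous_eval fun y => eval_continuous (A y)
  have himage : toStrongDual ⁻¹' adjointImageUnitBall A =
      adjoint '' (toStrongDual ⁻¹' Metric.closedBall 0 1) := by
    ext φ
    constructor
    · rintro ⟨ψ, hψ, hφ⟩
      exact ⟨toWeakDual ψ, mem_closedBall_zero_iff.mpr hψ, hφ.symm⟩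
    · rintro ⟨χ, hχ, rfl⟩
      exact ⟨toStrongDual χ, mem_closedBall_zero_iff.mp hχ, rfl⟩
  rw [himage]
  exact ((WeakDual.isCompact_closedBall (0 : StrongDual 𝕜 F) 1).image hcont).isClosed

/-- `⋂_{n ≥ 1} T*ⁿ S*`. -/
def iInterAdjointImagePowUnitBall (T : E →L[𝕜] E) : Set (StrongDual 𝕜 E) :=
  {φ | ∀ n : ℕ, 1 ≤ n → φ ∈ adjointImageUnitBall (T ^ n)}

section Contraction

variable {T : E →L[𝕜] E}

theorem norm_pow_le_one (hT : ‖T‖ ≤ 1) : ∀ n : ℕ, ‖T ^ n‖ ≤ 1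
  | 0 => norm_id_le
  | n + 1 => (norm_pow_le' T n.succ_pos).trans (pow_le_one₀ (norm_nonneg T) hT)

theorem antitone_norm_pow_apply (hT : ‖T‖ ≤ 1) (x : E) : Antitone fun n => ‖(T ^ n) x‖ :=
  antitone_nat_of_succ_le fun n => by
    rw [pow_succ', mul_apply_eq_comp]
    exact (T.le_of_opNorm_le hT _).trans_eq (one_mul _)

theorem tendsto_norm_pow_apply_iInf (hT : ‖T‖ ≤ 1) (x : E) :
    Tendsto (fun n => ‖(T ^ n) x‖) atTop (𝓝 (⨅ n, ‖(T ^ n) x‖)) :=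
  tendsto_atTop_ciInf (antitone_norm_pow_apply hT x) ⟨0, fun _ ⟨_, h⟩ => h ▸ norm_nonneg _⟩

theorem norm_comp_pow_le_one (hT : ‖T‖ ≤ 1) {ψ : StrongDual 𝕜 E} (hψ : ‖ψ‖ ≤ 1) (n : ℕ) :
    ‖ψ.comp (T ^ n)‖ ≤ 1 :=
  (ψ.opNorm_comp_le _).trans (mul_le_one₀ hψ (norm_nonneg _) (norm_pow_le_one hT n))

theorem comp_pow_mem_adjointImageUnitBall (hT : ‖T‖ ≤ 1) {ψ : StrongDual 𝕜 E} (hψ : ‖ψ‖ ≤ 1)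
    {m n : ℕ} (hmn : m ≤ n) : ψ.comp (T ^ n) ∈ adjointImageUnitBall (T ^ m) := by
  refine ⟨ψ.comp (T ^ (n - m)), norm_comp_pow_le_one hT hψ _, ?_⟩
  rw [comp_assoc, ← mul_def, ← pow_add, Nat.sub_add_cancel hmn]

theorem norm_apply_le_of_mem_adjointImageUnitBall {A : E →L[𝕜] F} {φ : StrongDual 𝕜 E}
    (hφ : φ ∈ adjointImageUnitBall A) (x : E) : ‖φ x‖ ≤ ‖A x‖ := by
  obtain ⟨ψ, hψ, rfl⟩ := hφ
  exact (ψ.le_of_opNorm_le hψ _).trans_eq (one_mul _)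

theorem norm_apply_le_iInf_norm_pow_apply (hT : ‖T‖ ≤ 1) {φ : StrongDual 𝕜 E}
    (hφ : φ ∈ iInterAdjointImagePowUnitBall T) (x : E) :
    ‖φ x‖ ≤ ⨅ n, ‖(T ^ n) x‖ :=
  le_ciInf fun n =>
    (norm_apply_le_of_mem_adjointImageUnitBall (hφ (n + 1) n.succ_pos) x).trans
      (antitone_norm_pow_apply hT x n.le_succ)

theorem exists_forall_mem_adjointImageUnitBall_apply_eq_iInf (hT : ‖T‖ ≤ 1) (x : E) :
    ∃ φ : StrongDual 𝕜 E, (∀ n, φ ∈ adjointImageUnitBall (T ^ n)) ∧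
      φ x = ((⨅ n, ‖(T ^ n) x‖ : ℝ) : 𝕜) := by
  choose ψ hψ_norm hψ_apply using fun n => exists_dual_vector'' 𝕜 ((T ^ n) x)
  let u : ℕ → WeakDual 𝕜 E := fun n => toWeakDual ((ψ n).comp (T ^ n))
  have hu_mem : ∀ {m n}, m ≤ n → toStrongDual (u n) ∈ adjointImageUnitBall (T ^ m) :=
    fun hmn => comp_pow_mem_adjointImageUnitBall hT (hψ_norm _) hmn
  have hu_ball : ∀ n, u n ∈ toStrongDual ⁻¹' Metric.closedBall 0 1 := fun n =>
    mem_closedBall_zero_iff.mpr (norm_comp_pow_le_one hT (hψ_norm n) n)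
  obtain ⟨φ, -, hφ⟩ := (WeakDual.isCompact_closedBall (0 : StrongDual 𝕜 E) 1).exists_mapClusterPt
    (f := atTop) (u := u) (tendsto_principal.mpr (Eventually.of_forall hu_ball))
  refine ⟨toStrongDual φ, fun m => ?_, ?_⟩
  · refine closure_minimal ?_ (isClosed_preimage_adjointImageUnitBall (T ^ m))
      (mapClusterPt_atTop_iff_forall_mem_closure.mp hφ m)
    rintro _ ⟨n, hmn, rfl⟩
    exact hu_mem hmn
  · have hcluster : MapClusterPt (φ x) atTop fun n => ((‖(T ^ n) x‖ : ℝ) : 𝕜) := by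
      convert hφ.continuousAt_comp (eval_continuous x).continuousAt using 1
      exact funext fun n => (hψ_apply n).symm
    have hlim := ((RCLike.continuous_ofReal (K := 𝕜)).tendsto _).comp
      (tendsto_norm_pow_apply_iInf hT x)
    exact eq_of_nhds_neBot (hcluster.neBot.mono (inf_le_inf_left _ hlim))

theorem iSup_norm_apply_eq_iInf_norm_pow_apply (hT : ‖T‖ ≤ 1) (x : E) :
    ⨆ φ : iInterAdjointImagePowUnitBall T, ‖φ.1 x‖ = ⨅ n, ‖(T ^ n) x‖ := by
  obtain ⟨φ, hφ, hφx⟩ := exists_forall_mem_adjointImageUnitBall_apply_eq_iInf hT x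
  have hle : ∀ φ : iInterAdjointImagePowUnitBall T, ‖φ.1 x‖ ≤ ⨅ n, ‖(T ^ n) x‖ :=
    fun φ => norm_apply_le_iInf_norm_pow_apply hT φ.2 x
  have hφ_norm : ‖φ x‖ = ⨅ n, ‖(T ^ n) x‖ := by
    rw [hφx, RCLike.norm_ofReal, abs_of_nonneg (le_ciInf fun _ => norm_nonneg _)]
  have : Nonempty (iInterAdjointImagePowUnitBall T) := ⟨⟨φ, fun n _ => hφ n⟩⟩
  exact le_antisymm (ciSup_le hle)
    (le_ciSup_of_le ⟨_, Set.forall_mem_range.mpr hle⟩ ⟨φ, fun n _ => hφ n⟩ hφ_norm.ge)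

end Contraction

end ContinuousLinearMap

theorem stmt4_general {B : Type*} [NormedAddCommGroup B] [NormedSpace ℝ B]
    (T : B →L[ℝ] B) (hT : ‖T‖ ≤ 1) (x : B) :
    Tendsto (fun n => ‖(T ^ n) x‖) atTop
      (nhds (⨆ φ : {φ : B →L[ℝ] ℝ //
        ∀ n : ℕ, 1 ≤ n → ∃ ψ : B →L[ℝ] ℝ, ‖ψ‖ ≤ 1 ∧ φ = ψ.comp (T ^ n)}, |φ.1 x|)) := by
  convert ContinuousLinearMap.tendsto_norm_pow_apply_iInf hT x using 2
  -- the index type is `iInterAdjointImagePowUnitBall T` unfolded, and `|r| = ‖r‖` on `ℝ`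
  exact ContinuousLinearMap.iSup_norm_apply_eq_iInf_norm_pow_apply hT x

/-- Derriennic: for a linear contraction `T` on a Banach space `B`,
`‖T^n x‖` converges to the supremum of `|⟨x, x*⟩|` over all functionals `x*` lying in
`⋂_{n ≥ 1} T*ⁿ S*`, where `S*` is the closed unit ball of the dual. -/
theorem stmt4 {B : Type*} [NormedAddCommGroup B] [NormedSpace ℝ B] [CompleteSpace B]
    (T : B →L[ℝ] B) (hT : ‖T‖ ≤ 1) (x : B) :
    Tendsto (fun n => ‖(T ^ n) x‖) atTop
      (nhds (⨆ φ : {φ : B →L[ℝ] ℝ //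
        ∀ n : ℕ, 1 ≤ n → ∃ ψ : B →L[ℝ] ℝ, ‖ψ‖ ≤ 1 ∧ φ = ψ.comp (T ^ n)}, |φ.1 x|)) :=
  stmt4_general T hT x
end

section
/- Let B be a Banach space, S* the closed unit ball of its dual, and T : B → B a linear contraction. Then for every x ∈ B, lim_{n→∞} (1/n)‖Σ_{i=1}^n T^i x‖ = sup { |⟨x, x*⟩| : x* ∈ S*, T* x* = x* }, where T* is the adjoint of T. -/
/-!
The sequence `‖Σ_{i=1}^n T^i x‖` is subadditive because `T` is a contraction, so its averages
converge to some `L`. A fixed point `φ` of `T*` in the dual unit ball satisfies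
`φ (Σ_{i=1}^n T^i x) = n φ(x)`, whence `|φ x| ≤ L`. Conversely, if `g_n` is a norming functional
for `Σ_{i=1}^n T^i x`, the Cesàro averages `ψ_n = (1/n) Σ_{i=1}^n T*^i g_n` lie in the dual unit
ball, satisfy `ψ_n x → L`, and are asymptotically `T*`-invariant by telescoping; any weak-*
cluster point (Banach–Alaoglu) is a fixed point of `T*` attaining the value `L` at `x`. So the
supremum is a maximum, equal to `L`.
-/

open Filter Topology

section PowSum

variable {R : Type*}

def powSum [Semiring R] (a : R) (n : ℕ) : R := ∑ i ∈ Finset.Icc 1 n, a ^ i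

section Semiring

variable [Semiring R] (a : R)

@[simp]
lemma powSum_zero : powSum a 0 = 0 := by simp [powSum]

lemma powSum_succ (n : ℕ) : powSum a (n + 1) = powSum a n + a ^ (n + 1) :=
  Finset.sum_Icc_succ_top (Nat.le_add_left 1 n) _

lemma powSum_add (m n : ℕ) : powSum a (m + n) = powSum a m + a ^ m * powSum a n := by
  induction n with
  | zero => simp
  | succ n ih =>
    rw [← add_assoc, powSum_succ, ih, powSum_succ, mul_add, ← pow_add, add_assoc, add_assoc m]

lemma powSum_mul_add_self (n : ℕ) : powSum a n * a + a = powSum a n + a ^ (n + 1) := by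
  induction n with
  | zero => simp
  | succ n ih => rw [powSum_succ, add_mul, add_right_comm, ih, ← pow_succ]

end Semiring

lemma norm_powSum_le [SeminormedRing R] {a : R} (ha : ‖a‖ ≤ 1) (n : ℕ) : ‖powSum a n‖ ≤ n := by
  have hpow : ∀ i ∈ Finset.Icc 1 n, ‖a ^ i‖ ≤ 1 := fun i hi =>
    (norm_pow_le' a (Finset.mem_Icc.1 hi).1).trans (pow_le_one₀ (norm_nonneg a) ha)
  calc ‖powSum a n‖ ≤ ∑ i ∈ Finset.Icc 1 n, ‖a ^ i‖ := norm_sum_le _ _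
    _ ≤ ∑ _i ∈ Finset.Icc 1 n, (1 : ℝ) := Finset.sum_le_sum hpow
    _ = n := by simp

end PowSum

namespace ContinuousLinearMap

variable {𝕜 E : Type*} [NontriviallyNormedField 𝕜] [NormedAddCommGroup E] [NormedSpace 𝕜 E]
  {T : E →L[𝕜] E}

lemma norm_pow_apply_le (hT : ‖T‖ ≤ 1) (n : ℕ) (y : E) : ‖(T ^ n) y‖ ≤ ‖y‖ := by
  induction n with
  | zero => simp
  | succ n ih =>
    rw [pow_succ', mul_apply_eq_comp]
    exact (T.le_of_opNorm_le hT _).trans (by rwa [one_mul])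

lemma subadditive_norm_powSum_apply (hT : ‖T‖ ≤ 1) (x : E) :
    Subadditive fun n => ‖powSum T n x‖ := fun m n =>
  calc ‖powSum T (m + n) x‖ = ‖powSum T m x + (T ^ m) (powSum T n x)‖ := by
        rw [powSum_add, add_apply, mul_apply_eq_comp]
    _ ≤ ‖powSum T m x‖ + ‖powSum T n x‖ :=
        (norm_add_le _ _).trans (add_le_add_right (norm_pow_apply_le hT m _) _)

lemma norm_powSum_apply_comp_sub_le (hT : ‖T‖ ≤ 1) (n : ℕ) (y : E) :
    ‖powSum T n (T y) - powSum T n y‖ ≤ 2 * ‖y‖ := by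
  have htelescope : powSum T n (T y) - powSum T n y = (T ^ (n + 1)) y - T y := by
    have := congr($(powSum_mul_add_self T n) y)
    simp only [add_apply, mul_apply_eq_comp] at this
    rw [sub_eq_sub_iff_add_eq_add, this, add_comm]
  rw [htelescope, two_mul]
  exact (norm_sub_le _ _).trans <|
    add_le_add (norm_pow_apply_le hT _ y) (by simpa using norm_pow_apply_le hT 1 y)

lemma apply_powSum_of_comp_eq {F : Type*} [NormedAddCommGroup F] [NormedSpace 𝕜 F]
    {φ : E →L[𝕜] F} (hφ : φ.comp T = φ) (n : ℕ) (y : E) : φ (powSum T n y) = n • φ y := by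
  have hpow : ∀ i (z : E), φ ((T ^ i) z) = φ z := by
    intro i
    induction i with
    | zero => simp
    | succ i ih => intro z; rw [pow_succ, mul_apply_eq_comp, ih, ← comp_apply, hφ]
  simp only [powSum, sum_apply, map_sum, hpow, Finset.sum_const, Nat.card_Icc, Nat.add_sub_cancel]

end ContinuousLinearMap

lemma MapClusterPt.eq_of_tendsto_comp {X Y ι : Type*} [TopologicalSpace X] [TopologicalSpace Y]
    [T2Space Y] {l : Filter ι} {u : ι → X} {p : X} {f : X → Y} {y : Y}
    (hu : MapClusterPt p l u) (hf : ContinuousAt f p) (hfu : Tendsto (f ∘ u) l (𝓝 y)) :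
    f p = y :=
  eq_of_nhds_neBot ((hu.continuousAt_comp hf).clusterPt.mono hfu)

lemma WeakDual.exists_mapClusterPt_of_norm_le {𝕜 E ι : Type*} [NontriviallyNormedField 𝕜]
    [ProperSpace 𝕜] [SeminormedAddCommGroup E] [NormedSpace 𝕜 E] {l : Filter ι} [l.NeBot]
    {ψ : ι → StrongDual 𝕜 E} {r : ℝ} (hψ : ∀ i, ‖ψ i‖ ≤ r) :
    ∃ φ : StrongDual 𝕜 E, ‖φ‖ ≤ r ∧
      MapClusterPt (StrongDual.toWeakDual φ) l (StrongDual.toWeakDual ∘ ψ) := by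
  have hball : Tendsto (StrongDual.toWeakDual ∘ ψ) l
      (𝓟 (WeakDual.toStrongDual ⁻¹' Metric.closedBall 0 r)) :=
    tendsto_principal.2 (.of_forall fun i => by simpa using hψ i)
  obtain ⟨φ, hφ, hcl⟩ := (WeakDual.isCompact_closedBall 0 r).exists_mapClusterPt hball
  exact ⟨WeakDual.toStrongDual φ, by simpa using hφ, hcl⟩

section Dual

variable {E : Type*} [NormedAddCommGroup E] [NormedSpace ℝ E] {T : E →L[ℝ] E} {x : E} {L : ℝ}

lemma abs_apply_le_of_tendsto_norm_powSum_div {φ : StrongDual ℝ E} (hφ : ‖φ‖ ≤ 1)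
    (hφT : φ.comp T = φ) (hL : Tendsto (fun n : ℕ => ‖powSum T n x‖ / n) atTop (𝓝 L)) :
    |φ x| ≤ L := by
  refine ge_of_tendsto hL (eventually_atTop.2 ⟨1, fun n hn => ?_⟩)
  rw [le_div_iff₀ (by exact_mod_cast hn), mul_comm, ← Nat.abs_cast, ← abs_mul, ← nsmul_eq_mul,
    ← ContinuousLinearMap.apply_powSum_of_comp_eq hφT]
  simpa using φ.le_of_opNorm_le hφ (powSum T n x)

lemma exists_comp_eq_apply_eq_of_tendsto_norm_powSum_div (hT : ‖T‖ ≤ 1)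
    (hL : Tendsto (fun n : ℕ => ‖powSum T n x‖ / n) atTop (𝓝 L)) :
    ∃ φ : StrongDual ℝ E, ‖φ‖ ≤ 1 ∧ φ.comp T = φ ∧ φ x = L := by
  choose g hg_norm hg_apply using fun n => exists_dual_vector'' ℝ (powSum T n x)
  set ψ : ℕ → StrongDual ℝ E := fun n => (n : ℝ)⁻¹ • (g n).comp (powSum T n)
  have hψ_norm : ∀ n, ‖ψ n‖ ≤ 1 := fun n =>
    calc ‖ψ n‖ ≤ (n : ℝ)⁻¹ * (‖g n‖ * ‖powSum T n‖) := by
          rw [norm_smul, norm_inv, RCLike.norm_natCast]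
          gcongr
          exact (g n).opNorm_comp_le _
      _ ≤ (n : ℝ)⁻¹ * (1 * n) := by gcongr; exacts [hg_norm n, norm_powSum_le hT n]
      _ ≤ 1 := by rw [one_mul]; exact inv_mul_le_one_of_le₀ le_rfl (Nat.cast_nonneg n)
  have hψ_almost_fixed : ∀ y, Tendsto (fun n => ψ n (T y) - ψ n y) atTop (𝓝 0) := fun y => by
    refine squeeze_zero_norm (fun n => ?_) (tendsto_const_div_atTop_nhds_zero_nat (2 * ‖y‖))
    calc ‖ψ n (T y) - ψ n y‖ = (n : ℝ)⁻¹ * ‖g n (powSum T n (T y) - powSum T n y)‖ := by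
          simp [ψ, ← mul_sub]
      _ ≤ (n : ℝ)⁻¹ * (1 * (2 * ‖y‖)) := by
          gcongr
          exact (g n).le_of_opNorm_le_of_le (hg_norm n) (T.norm_powSum_apply_comp_sub_le hT n y)
      _ = 2 * ‖y‖ / n := by ring
  obtain ⟨φ, hφ_norm, hφ⟩ := WeakDual.exists_mapClusterPt_of_norm_le (l := atTop) hψ_norm
  refine ⟨φ, hφ_norm, ContinuousLinearMap.ext fun y => sub_eq_zero.1 ?_, ?_⟩
  · exact hφ.eq_of_tendsto_comp (f := fun w : WeakDual ℝ E => w (T y) - w y)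
      ((WeakDual.eval_continuous _).sub (WeakDual.eval_continuous _)).continuousAt
      (hψ_almost_fixed y)
  · refine hφ.eq_of_tendsto_comp (f := fun w : WeakDual ℝ E => w x)
      (WeakDual.eval_continuous x).continuousAt (hL.congr fun n => ?_)
    change _ = ψ n x
    simp [ψ, hg_apply, div_eq_inv_mul]

end Dual

theorem stmt5_general {B : Type*} [NormedAddCommGroup B] [NormedSpace ℝ B]
    (T : B →L[ℝ] B) (hT : ‖T‖ ≤ 1) (x : B) :
    Tendsto (fun n : ℕ => (1 / (n : ℝ)) * ‖∑ i ∈ Finset.Icc 1 n, (T ^ i) x‖) atTop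
      (nhds (⨆ φ : {φ : B →L[ℝ] ℝ // ‖φ‖ ≤ 1 ∧ φ.comp T = φ}, |φ.1 x|)) := by
  have hsub := T.subadditive_norm_powSum_apply hT x
  have hL := hsub.tendsto_lim ⟨0, by rintro _ ⟨n, rfl⟩; positivity⟩
  obtain ⟨Φ, hΦ_norm, hΦT, hΦx⟩ := exists_comp_eq_apply_eq_of_tendsto_norm_powSum_div hT hL
  have hmax : IsGreatest (Set.range fun φ : {φ : B →L[ℝ] ℝ // ‖φ‖ ≤ 1 ∧ φ.comp T = φ} => |φ.1 x|)
      hsub.lim := by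
    refine ⟨⟨⟨Φ, hΦ_norm, hΦT⟩, ?_⟩, ?_⟩
    · exact le_antisymm (abs_apply_le_of_tendsto_norm_powSum_div hΦ_norm hΦT hL)
        (hΦx ▸ le_abs_self _)
    · rintro _ ⟨φ, rfl⟩
      exact abs_apply_le_of_tendsto_norm_powSum_div φ.2.1 φ.2.2 hL
  rw [iSup, hmax.csSup_eq]
  refine hL.congr fun n => ?_
  rw [powSum, sum_apply, one_div_mul_eq_div]

/-- Derriennic: for a linear contraction `T` on a Banach space `B`,
`(1/n)‖Σ_{i=1}^n T^i x‖` converges to the supremum of `|⟨x, x*⟩|` over the fixed points of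
the adjoint `T*` (i.e. `x* ∘ T = x*`) in the closed unit ball of the dual. -/
theorem stmt5 {B : Type*} [NormedAddCommGroup B] [NormedSpace ℝ B] [CompleteSpace B]
    (T : B →L[ℝ] B) (hT : ‖T‖ ≤ 1) (x : B) :
    Tendsto (fun n : ℕ => (1 / (n : ℝ)) * ‖∑ i ∈ Finset.Icc 1 n, (T ^ i) x‖) atTop
      (nhds (⨆ φ : {φ : B →L[ℝ] ℝ // ‖φ‖ ≤ 1 ∧ φ.comp T = φ}, |φ.1 x|)) :=
  stmt5_general T hT x
end

section
/- Let G be a group with a G-invariant σ-algebra, μ a probability measure on G, and t ∈ (0,1). Define θ = t·μ + (1−t)·δ_e. Then H^∞(G,μ) = H^∞(G,θ): a bounded measurable function on G is μ-harmonic if and only if it is θ-harmonic. -/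
open MeasureTheory Filter ProbabilityTheory
open scoped ENNReal NNReal

noncomputable def mconv {G : Type*} [Mul G] [MeasurableSpace G] (μ ν : Measure G) : Measure G :=
  (μ.prod ν).map (fun p => p.1 * p.2)

noncomputable def mconvPow {G : Type*} [Monoid G] [MeasurableSpace G] (μ : Measure G) : ℕ → Measure G
  | 0 => Measure.dirac 1
  | n+1 => mconv (mconvPow μ n) μ

noncomputable def tildeMeasure {G : Type*} [Monoid G] [MeasurableSpace G] (μ : Measure G) : Measure G :=
  Measure.sum (fun n => ((2:ℝ≥0∞)^(n+1))⁻¹ • mconvPow μ n)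

theorem MeasureTheory.integral_smul_add_smul_dirac {α E : Type*} [MeasurableSpace α]
    [NormedAddCommGroup E] [NormedSpace ℝ E] [CompleteSpace E] {μ : Measure α} {f : α → E}
    (hf : Integrable f μ) (hfm : StronglyMeasurable f) (a : α) {t : ℝ} (ht₀ : 0 ≤ t)
    (ht₁ : t ≤ 1) :
    ∫ x, f x ∂(ENNReal.ofReal t • μ + ENNReal.ofReal (1 - t) • Measure.dirac a) =
      AffineMap.lineMap (f a) (∫ x, f x ∂μ) t := by
  have hfa : Integrable f (Measure.dirac a) := integrable_dirac' hfm (by simp)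
  rw [integral_add_measure (hf.smul_measure ENNReal.ofReal_ne_top)
      (hfa.smul_measure ENNReal.ofReal_ne_top), integral_smul_measure, integral_smul_measure,
    integral_dirac' f a hfm, ENNReal.toReal_ofReal ht₀, ENNReal.toReal_ofReal (sub_nonneg.2 ht₁),
    AffineMap.lineMap_apply_module, add_comm]

/-- the lazy version `θ = t·μ + (1−t)·δ_e` of `μ` has the same bounded
harmonic functions as `μ`. -/
theorem stmt8 {G : Type*} [Group G] [MeasurableSpace G] [MeasurableMul₂ G]
    (μ : Measure G) [IsProbabilityMeasure μ]
    (t : ℝ) (ht : t ∈ Set.Ioo (0:ℝ) 1)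
    (θ : Measure G)
    (hθ : θ = ENNReal.ofReal t • μ + ENNReal.ofReal (1 - t) • Measure.dirac (1 : G))
    (h : G → ℂ) (hmeas : Measurable h) (hbdd : ∃ C, ∀ g, ‖h g‖ ≤ C) :
    (∀ g, h g = ∫ γ, h (g * γ) ∂μ) ↔ (∀ g, h g = ∫ γ, h (g * γ) ∂θ) := by
  obtain ⟨C, hC⟩ := hbdd
  refine forall_congr' fun g => ?_
  have hm : StronglyMeasurable fun γ => h (g * γ) :=
    (hmeas.comp (measurable_const_mul g)).stronglyMeasurable
  have hi : Integrable (fun γ => h (g * γ)) μ :=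
    (integrable_const C).mono' hm.aestronglyMeasurable (ae_of_all _ fun γ => hC _)
  rw [hθ, integral_smul_add_smul_dirac hi hm 1 ht.1.le ht.2.le, mul_one, eq_comm (a := h g)
    (b := AffineMap.lineMap _ _ _), AffineMap.lineMap_eq_left_iff, or_iff_left ht.1.ne']
end

section
/- Let E be a measurable space with Markov kernel P, and let m be a σ-finite measure on E with mP ≪ m. Then the map T sending the Radon–Nikodym derivative dκ/dm of a finite signed measure κ ≪ m to d(κP)/dm is a well-defined linear contraction on L¹(m), and its adjoint on L^∞(m) is the averaging operator f ↦ (x ↦ ∫_E f(y) dP_x(y)). -/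
/-!
Write `f • m = f⁺ • m - f⁻ • m` as a difference of finite measures; their images under `P` are
`≪ m` because `mP ≪ m`, and `T f` is the difference of their Radon–Nikodym derivatives.
Integrating a bounded `g` against `T f` computes `∫ g d((f • m)P) = ∫ f(x) ∫ g dP_x dm(x)`, which
is the adjoint identity; indicators `g = 1_A` give the set integrals. As `m` is σ-finite, these
set integrals determine `T f`, which makes `T` linear. Testing against `g = ±1` according to the
sign of `T f`, for which `|∫ g dP_x| ≤ 1`, bounds `‖T f‖₁` by `‖f‖₁`.
-/

open MeasureTheory ProbabilityTheory
open scoped ENNReal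

namespace MeasureTheory

variable {α β : Type*} [MeasurableSpace α] [MeasurableSpace β]

theorem Measure.integral_comp {E : Type*} [NormedAddCommGroup E] [NormedSpace ℝ E]
    {μ : Measure α} {κ : Kernel α β} {f : β → E} (hf : Integrable f (κ ∘ₘ μ)) :
    ∫ y, f y ∂(κ ∘ₘ μ) = ∫ x, ∫ y, f y ∂κ x ∂μ := by
  rw [Measure.comp_eq_comp_const_apply] at hf ⊢
  simpa using Kernel.integral_comp hf

theorem Measure.integrable_integral_of_integrable_comp {E : Type*} [NormedAddCommGroup E]
    [NormedSpace ℝ E] {μ : Measure α} {κ : Kernel α β} {f : β → E}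
    (hf : Integrable f (κ ∘ₘ μ)) : Integrable (fun x ↦ ∫ y, f y ∂κ x) μ := by
  rw [Measure.comp_eq_comp_const_apply] at hf
  simpa using hf.integral_comp

theorem integral_mul_eq_integral_withDensity_sub {μ : Measure α} {f h : α → ℝ}
    (hf : Integrable f μ) (hpos : Integrable h (μ.withDensity fun x ↦ ENNReal.ofReal (f x)))
    (hneg : Integrable h (μ.withDensity fun x ↦ ENNReal.ofReal (-f x))) :
    ∫ x, f x * h x ∂μ = ∫ x, h x ∂(μ.withDensity fun x ↦ ENNReal.ofReal (f x))
      - ∫ x, h x ∂(μ.withDensity fun x ↦ ENNReal.ofReal (-f x)) := by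
  have hlt (g : α → ℝ) : ∀ᵐ x ∂μ, ENNReal.ofReal (g x) < ∞ :=
    ae_of_all _ fun _ ↦ ENNReal.ofReal_lt_top
  have hpos_meas : AEMeasurable (fun x ↦ ENNReal.ofReal (f x)) μ := by fun_prop
  have hneg_meas : AEMeasurable (fun x ↦ ENNReal.ofReal (-f x)) μ := by fun_prop
  rw [integrable_withDensity_iff_integrable_smul₀' hpos_meas (hlt f)] at hpos
  rw [integrable_withDensity_iff_integrable_smul₀' hneg_meas (hlt (-f))] at hneg
  rw [integral_withDensity_eq_integral_toReal_smul₀ hpos_meas (hlt f),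
    integral_withDensity_eq_integral_toReal_smul₀ hneg_meas (hlt (-f)), ← integral_sub hpos hneg]
  congr with x
  simp only [ENNReal.toReal_ofReal', smul_eq_mul, ← sub_mul, max_zero_sub_max_neg_zero_eq_self]

end MeasureTheory

namespace ProbabilityTheory.Kernel

variable {α β : Type*} [MeasurableSpace α] [MeasurableSpace β]

noncomputable def transfer (κ : Kernel α β) (μ : Measure α) (ν : Measure β) (f : α → ℝ) :
    β → ℝ :=
  fun y ↦ ((κ ∘ₘ μ.withDensity fun x ↦ ENNReal.ofReal (f x)).rnDeriv ν y).toReal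
    - ((κ ∘ₘ μ.withDensity fun x ↦ ENNReal.ofReal (-f x)).rnDeriv ν y).toReal

variable {κ : Kernel α β} {μ : Measure α} {ν : Measure β} {f : α → ℝ}

theorem transfer_congr_ae {g : α → ℝ} (hfg : f =ᵐ[μ] g) :
    κ.transfer μ ν f = κ.transfer μ ν g := by
  have hpos : (fun x ↦ ENNReal.ofReal (f x)) =ᵐ[μ] fun x ↦ ENNReal.ofReal (g x) :=
    hfg.mono fun _ hx ↦ congrArg ENNReal.ofReal hx
  have hneg : (fun x ↦ ENNReal.ofReal (-f x)) =ᵐ[μ] fun x ↦ ENNReal.ofReal (-g x) :=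
    hfg.mono fun _ hx ↦ congrArg (fun r ↦ ENNReal.ofReal (-r)) hx
  unfold transfer
  rw [MeasureTheory.withDensity_congr_ae hpos, MeasureTheory.withDensity_congr_ae hneg]

theorem measurable_transfer : Measurable (κ.transfer μ ν f) := by
  unfold transfer
  fun_prop

section FiniteKernel

variable [IsFiniteKernel κ]

theorem isFiniteMeasure_comp_withDensity_ofReal (hf : Integrable f μ) :
    IsFiniteMeasure (κ ∘ₘ μ.withDensity fun x ↦ ENNReal.ofReal (f x)) :=
  have := isFiniteMeasure_withDensity hf.lintegral_lt_top.ne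
  inferInstance

theorem integrable_transfer (hf : Integrable f μ) : Integrable (κ.transfer μ ν f) ν :=
  have := isFiniteMeasure_comp_withDensity_ofReal (κ := κ) hf
  have := isFiniteMeasure_comp_withDensity_ofReal (κ := κ) hf.neg
  Measure.integrable_toReal_rnDeriv.sub Measure.integrable_toReal_rnDeriv

variable [SigmaFinite ν]

theorem integral_transfer_mul (hκ : κ ∘ₘ μ ≪ ν) (hf : Integrable f μ) {g : β → ℝ}
    (hg : Measurable g) {C : ℝ} (hgC : ∀ y, |g y| ≤ C) :
    ∫ y, κ.transfer μ ν f y * g y ∂ν = ∫ x, f x * ∫ y, g y ∂κ x ∂μ := by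
  set μp := μ.withDensity fun x ↦ ENNReal.ofReal (f x)
  set μn := μ.withDensity fun x ↦ ENNReal.ofReal (-f x)
  have := isFiniteMeasure_comp_withDensity_ofReal (κ := κ) hf
  have := isFiniteMeasure_comp_withDensity_ofReal (κ := κ) hf.neg
  have hg_int (ρ : Measure β) [IsFiniteMeasure ρ] : Integrable g ρ :=
    .of_bound hg.aestronglyMeasurable C
      (ae_of_all _ fun y ↦ (Real.norm_eq_abs _).trans_le (hgC y))
  have hpos : κ ∘ₘ μp ≪ ν :=
    ((MeasureTheory.withDensity_absolutelyContinuous μ _).comp_right κ).trans hκ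
  have hneg : κ ∘ₘ μn ≪ ν :=
    ((MeasureTheory.withDensity_absolutelyContinuous μ _).comp_right κ).trans hκ
  calc ∫ y, κ.transfer μ ν f y * g y ∂ν
      = ∫ y, ((κ ∘ₘ μp).rnDeriv ν y).toReal * g y ∂ν
          - ∫ y, ((κ ∘ₘ μn).rnDeriv ν y).toReal * g y ∂ν := by
        rw [← integral_sub ((integrable_toReal_rnDeriv_mul_iff hpos).2 (hg_int _))
          ((integrable_toReal_rnDeriv_mul_iff hneg).2 (hg_int _))]
        simp only [transfer, sub_mul, μp, μn]
    _ = ∫ y, g y ∂(κ ∘ₘ μp) - ∫ y, g y ∂(κ ∘ₘ μn) := by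
        rw [integral_toReal_rnDeriv_mul hpos, integral_toReal_rnDeriv_mul hneg]
    _ = ∫ x, ∫ y, g y ∂κ x ∂μp - ∫ x, ∫ y, g y ∂κ x ∂μn := by
        rw [Measure.integral_comp (hg_int _), Measure.integral_comp (hg_int _)]
    _ = ∫ x, f x * ∫ y, g y ∂κ x ∂μ :=
        (integral_mul_eq_integral_withDensity_sub hf
          (Measure.integrable_integral_of_integrable_comp (hg_int _))
          (Measure.integrable_integral_of_integrable_comp (hg_int _))).symm

theorem integrable_mul_toReal_apply (hf : Integrable f μ) {A : Set β} (hA : MeasurableSet A) :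
    Integrable (fun x ↦ f x * (κ x A).toReal) μ :=
  hf.mul_bdd (κ.measurable_coe hA).ennreal_toReal.aestronglyMeasurable (c := κ.bound.toReal)
    (ae_of_all _ fun x ↦ by
      rw [Real.norm_of_nonneg ENNReal.toReal_nonneg]
      exact ENNReal.toReal_mono κ.bound_ne_top (κ.measure_le_bound x A))

theorem setIntegral_transfer (hκ : κ ∘ₘ μ ≪ ν) (hf : Integrable f μ) {A : Set β}
    (hA : MeasurableSet A) :
    ∫ y in A, κ.transfer μ ν f y ∂ν = ∫ x, f x * (κ x A).toReal ∂μ := by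
  have hA1 : ∀ y, |A.indicator (1 : β → ℝ) y| ≤ 1 := fun y ↦ by
    by_cases hy : y ∈ A <;> simp [hy]
  have h := integral_transfer_mul hκ hf (measurable_one.indicator hA) hA1
  simp only [integral_indicator_one hA, measureReal_def] at h
  rw [← h, ← integral_indicator hA]
  congr with y
  by_cases hy : y ∈ A <;> simp [hy]

theorem ae_eq_transfer_of_forall_setIntegral_eq (hκ : κ ∘ₘ μ ≪ ν) (hf : Integrable f μ)
    {h : β → ℝ} (hh : Integrable h ν)
    (H : ∀ A, MeasurableSet A → ∫ y in A, h y ∂ν = ∫ x, f x * (κ x A).toReal ∂μ) :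
    κ.transfer μ ν f =ᵐ[ν] h :=
  ae_eq_of_forall_setIntegral_eq_of_sigmaFinite (fun _ _ _ ↦ (integrable_transfer hf).integrableOn)
    (fun _ _ _ ↦ hh.integrableOn) fun A hA _ ↦ (setIntegral_transfer hκ hf hA).trans (H A hA).symm

theorem transfer_add_ae (hκ : κ ∘ₘ μ ≪ ν) (hf : Integrable f μ) {g : α → ℝ}
    (hg : Integrable g μ) :
    κ.transfer μ ν (f + g) =ᵐ[ν] κ.transfer μ ν f + κ.transfer μ ν g :=
  ae_eq_transfer_of_forall_setIntegral_eq hκ (hf.add hg)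
    ((integrable_transfer hf).add (integrable_transfer hg)) fun A hA ↦ by
      simp only [Pi.add_apply, add_mul]
      rw [integral_add (integrable_transfer hf).integrableOn (integrable_transfer hg).integrableOn,
        integral_add (integrable_mul_toReal_apply hf hA) (integrable_mul_toReal_apply hg hA),
        setIntegral_transfer hκ hf hA, setIntegral_transfer hκ hg hA]

theorem transfer_smul_ae (hκ : κ ∘ₘ μ ≪ ν) (hf : Integrable f μ) (c : ℝ) :
    κ.transfer μ ν (c • f) =ᵐ[ν] c • κ.transfer μ ν f :=
  ae_eq_transfer_of_forall_setIntegral_eq hκ (hf.smul c) ((integrable_transfer hf).smul c)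
    fun A hA ↦ by
      simp only [Pi.smul_apply, smul_eq_mul, mul_assoc, integral_const_mul,
        setIntegral_transfer hκ hf hA]

variable (κ μ ν) in
noncomputable def transferₗ (hκ : κ ∘ₘ μ ≪ ν) : Lp ℝ 1 μ →ₗ[ℝ] Lp ℝ 1 ν where
  toFun f := (integrable_transfer (L1.integrable_coeFn f)).toL1 _
  map_add' f g := by
    rw [← Integrable.toL1_add, Integrable.toL1_eq_toL1_iff, transfer_congr_ae (Lp.coeFn_add f g)]
    exact transfer_add_ae hκ (L1.integrable_coeFn f) (L1.integrable_coeFn g)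
  map_smul' c f := by
    rw [RingHom.id_apply, ← Integrable.toL1_smul, Integrable.toL1_eq_toL1_iff,
      transfer_congr_ae (Lp.coeFn_smul c f)]
    exact transfer_smul_ae hκ (L1.integrable_coeFn f) c

theorem coeFn_transferₗ (hκ : κ ∘ₘ μ ≪ ν) (f : Lp ℝ 1 μ) :
    ⇑(transferₗ κ μ ν hκ f) =ᵐ[ν] κ.transfer μ ν f :=
  Integrable.coeFn_toL1 (integrable_transfer (L1.integrable_coeFn f))

end FiniteKernel

section MarkovKernel

variable [IsMarkovKernel κ] [SigmaFinite ν]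

theorem integral_abs_transfer_le (hκ : κ ∘ₘ μ ≪ ν) (hf : Integrable f μ) :
    ∫ y, |κ.transfer μ ν f y| ∂ν ≤ ∫ x, |f x| ∂μ := by
  set T := κ.transfer μ ν f
  set s : β → ℝ := fun y ↦ if 0 ≤ T y then 1 else -1
  have hs : Measurable s :=
    Measurable.ite (measurableSet_le measurable_const measurable_transfer) measurable_const
      measurable_const
  have hs1 : ∀ y, |s y| ≤ 1 := fun y ↦ by by_cases h : 0 ≤ T y <;> simp [s, h]
  have hκs : ∀ x, |∫ y, s y ∂κ x| ≤ 1 := fun x ↦ by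
    simpa using norm_integral_le_of_norm_le_const (μ := κ x)
      (ae_of_all _ fun y ↦ (Real.norm_eq_abs _).trans_le (hs1 y))
  calc ∫ y, |T y| ∂ν = ∫ y, T y * s y ∂ν := by
        congr with y
        by_cases h : 0 ≤ T y
        · simp [s, h, abs_of_nonneg h]
        · simp [s, h, abs_of_neg (not_le.1 h)]
    _ = ∫ x, f x * ∫ y, s y ∂κ x ∂μ := integral_transfer_mul hκ hf hs hs1
    _ ≤ ∫ x, |f x| ∂μ := by
        refine (le_abs_self _).trans <| abs_integral_le_integral_abs.trans <|
          integral_mono_of_nonneg (ae_of_all _ fun _ ↦ abs_nonneg _) hf.abs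
            (ae_of_all _ fun x ↦ ?_)
        dsimp only
        rw [abs_mul]
        exact mul_le_of_le_one_right (abs_nonneg _) (hκs x)

theorem norm_transferₗ_le (hκ : κ ∘ₘ μ ≪ ν) (f : Lp ℝ 1 μ) : ‖transferₗ κ μ ν hκ f‖ ≤ ‖f‖ := by
  simp only [L1.norm_eq_integral_norm, Real.norm_eq_abs]
  exact (integral_congr_ae ((coeFn_transferₗ hκ f).fun_comp abs)).trans_le
    (integral_abs_transfer_le hκ (L1.integrable_coeFn f))

variable (κ μ ν) in
noncomputable def transferL1 (hκ : κ ∘ₘ μ ≪ ν) : Lp ℝ 1 μ →L[ℝ] Lp ℝ 1 ν :=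
  (transferₗ κ μ ν hκ).mkContinuous 1 fun f ↦ (norm_transferₗ_le hκ f).trans_eq (one_mul _).symm

theorem norm_transferL1_le (hκ : κ ∘ₘ μ ≪ ν) : ‖transferL1 κ μ ν hκ‖ ≤ 1 :=
  LinearMap.mkContinuous_norm_le _ zero_le_one _

theorem coeFn_transferL1 (hκ : κ ∘ₘ μ ≪ ν) (f : Lp ℝ 1 μ) :
    ⇑(transferL1 κ μ ν hκ f) =ᵐ[ν] κ.transfer μ ν f :=
  coeFn_transferₗ hκ f

end MarkovKernel

end ProbabilityTheory.Kernel

/-- if `m` is σ-finite and `mP ≪ m`, the map sending `dκ/dm` to `d(κP)/dm`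
is a well-defined linear contraction `T` on `L¹(m)` — characterized by
`∫_A T f dm = ∫ f(x) P(x,A) dm(x)` — whose adjoint on `L^∞(m)` is the averaging operator
`g ↦ (x ↦ ∫ g dP_x)`. -/
theorem stmt19 {E : Type*} [MeasurableSpace E] (P : Kernel E E) [IsMarkovKernel P]
    (m : Measure E) [SigmaFinite m] (habs : m.bind (⇑P) ≪ m) :
    ∃ T : Lp ℝ 1 m →L[ℝ] Lp ℝ 1 m, ‖T‖ ≤ 1 ∧
      (∀ (f : Lp ℝ 1 m) (A : Set E), MeasurableSet A →
        (∫ y in A, (T f) y ∂m) = ∫ x, (f x) * (P x A).toReal ∂m) ∧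
      (∀ (f : Lp ℝ 1 m) (g : E → ℝ), Measurable g → (∃ C, ∀ y, |g y| ≤ C) →
        (∫ x, (T f) x * g x ∂m) = ∫ x, (f x) * ∫ y, g y ∂(P x) ∂m) := by
  have hT (f : Lp ℝ 1 m) := P.coeFn_transferL1 habs f
  refine ⟨P.transferL1 m m habs, P.norm_transferL1_le habs, fun f A hA ↦ ?_,
    fun f g hg ⟨C, hC⟩ ↦ ?_⟩
  · rw [integral_congr_ae (ae_restrict_of_ae (hT f))]
    exact P.setIntegral_transfer habs (L1.integrable_coeFn f) hA
  · rw [integral_congr_ae ((hT f).mono fun x hx ↦ congrArg (· * g x) hx)]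
    exact P.integral_transfer_mul habs (L1.integrable_coeFn f) hg hC
end
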